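/- If Γ is an even unimodular lattice and Λ ⊂ Γ is a non-degenerate primitive sublattice with orthogonal complement V = Λ^⊥ ∩ Γ, then the discriminant forms of Λ and V satisfy q_Λ = -q_V under a canonical isomorphism of discriminant groups, and Γ ≅ { (λ, v) ∈ Λ* ⊕ V* : γ(λ mod Λ) = v mod V } for that isomorphism γ: Λ*/Λ → V*/V. -/

import Mathlib

open Submodule

variable {V : Type*} [AddCommGroup V] [Module ℚ V]

/-- The dual lattice `L* = {v ∈ span_ℚ L : B(v, L) ⊆ ℤ}` of a lattice `L` inside a
rational quadratic space. -/
def dualLat (B : V →ₗ[ℚ] V →ₗ[ℚ] ℚ) (L : Submodule ℤ V) : Submodule ℤ V where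
  carrier := { v | v ∈ span ℚ (L : Set V) ∧ ∀ w ∈ L, ∃ k : ℤ, B v w = k }
  add_mem' := by
    rintro a b ⟨haS, ha⟩ ⟨hbS, hb⟩
    refine ⟨add_mem haS hbS, fun w hw => ?_⟩
    obtain ⟨k, hk⟩ := ha w hw
    obtain ⟨l, hl⟩ := hb w hw
    exact ⟨k + l, by simp [hk, hl]⟩
  zero_mem' := ⟨zero_mem _, fun w _ => ⟨0, by simp⟩⟩
  smul_mem' := by
    rintro c v ⟨hvS, hv⟩
    refine ⟨zsmul_mem hvS c, fun w hw => ?_⟩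
    obtain ⟨k, hk⟩ := hv w hw
    refine ⟨c * k, ?_⟩
    have : B (c • v) = c • B v := map_zsmul B c v
    rw [this]
    simp [hk, mul_comm]
  
/-- The orthogonal complement `Λ^⊥ ∩ Γ` of a sublattice `Λ` inside a lattice `Γ`. -/
def orthCompl (B : V →ₗ[ℚ] V →ₗ[ℚ] ℚ) (Γ Λ : Submodule ℤ V) : Submodule ℤ V where
  carrier := { v | v ∈ Γ ∧ ∀ w ∈ Λ, B v w = 0 }
  add_mem' := by
    rintro a b ⟨haΓ, ha⟩ ⟨hbΓ, hb⟩
    exact ⟨add_mem haΓ hbΓ, fun w hw => by simp [ha w hw, hb w hw]⟩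
  zero_mem' := ⟨zero_mem _, fun w _ => by simp⟩
  smul_mem' := by
    rintro c v ⟨hvΓ, hv⟩
    refine ⟨zsmul_mem hvΓ c, fun w hw => ?_⟩
    have : B (c • v) = c • B v := map_zsmul B c v
    rw [this]
    simp [hv w hw]

/-- The discriminant group `L*/L` of a lattice `L`. -/
abbrev Disc (B : V →ₗ[ℚ] V →ₗ[ℚ] ℚ) (L : Submodule ℤ V) :=
  dualLat B L ⧸ (Submodule.comap (dualLat B L).subtype L)

theorem test : True := trivial

/-!
Write `U = span_ℚ Λ`, `W = U^⊥` and `𝒱 = Λ^⊥ ∩ Γ`; then `V = U ⊕ W` and `span_ℚ 𝒱 = W`.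
On `Λ* × 𝒱*` consider the glue relation `l + w ∈ Γ`. It projects onto both factors: a functional
that is integral on the primitive `Λ` extends integrally to `Γ`, because `Γ/Λ` is free, and is
therefore represented by a vector of `Γ* = Γ` (symmetrically for `𝒱`). By primitivity it meets
`Λ* × 0` and `0 × 𝒱*` exactly in `Λ` and `𝒱`, so by Goursat's lemma it is the graph of an
isomorphism `γ` of the discriminant groups. Since `Λ* ⊥ 𝒱*`, `q_Λ(l) + q_𝒱(w) = q(l + w)`, which
is even because `Γ` is.
-/

namespace Submodule

section Goursat

variable {R M N : Type*} [Ring R] [AddCommGroup M] [Module R M] [AddCommGroup N] [Module R N]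

theorem exists_linearEquiv_mk_eq_mk_iff {L : Submodule R (M × N)} {M₀ : Submodule R M}
    {N₀ : Submodule R N} (h₁ : ∀ m, ∃ n, (m, n) ∈ L) (h₂ : ∀ n, ∃ m, (m, n) ∈ L)
    (hM₀ : ∀ m, (m, 0) ∈ L ↔ m ∈ M₀) (hN₀ : ∀ n, (0, n) ∈ L ↔ n ∈ N₀) :
    ∃ e : (M ⧸ M₀) ≃ₗ[R] N ⧸ N₀, ∀ m n, e (Quotient.mk m) = Quotient.mk n ↔ (m, n) ∈ L := by
  have hfst : L.goursatFst = M₀ := by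
    ext m
    rw [← mem_toAddSubgroup, goursatFst_toAddSubgroup, AddSubgroup.mem_goursatFst]
    exact hM₀ m
  have hsnd : L.goursatSnd = N₀ := by
    ext n
    rw [← mem_toAddSubgroup, goursatSnd_toAddSubgroup, AddSubgroup.mem_goursatSnd]
    exact hN₀ n
  obtain ⟨e, he⟩ := goursat_surjective (L := L) (fun m => by simpa using h₁ m)
    (fun n => by simpa using h₂ n)
  subst hfst hsnd
  refine ⟨e, fun m n => ⟨fun h => ?_, fun h => ?_⟩⟩
  · have hgraph : (Quotient.mk m, Quotient.mk n) ∈ e.toLinearMap.graph := h.symm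
    rw [← he] at hgraph
    obtain ⟨⟨⟨m', n'⟩, hmn'⟩, hq⟩ := hgraph
    simp only [LinearMap.coe_comp, Function.comp_apply, subtype_apply, LinearMap.prodMap_apply,
      mkQ_apply, Prod.mk.injEq, Quotient.eq] at hq
    have hdiff : (m' - m, n' - n) ∈ L := L.goursatFst_prod_goursatSnd_le ⟨hq.1, hq.2⟩
    simpa using sub_mem hmn' hdiff
  · have hgraph : (Quotient.mk m, Quotient.mk n) ∈ e.toLinearMap.graph := by
      rw [← he]
      exact ⟨⟨(m, n), h⟩, rfl⟩
    exact hgraph.symm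

end Goursat

theorem exists_retraction_of_saturated {M : Type*} [AddCommGroup M] [Module.Finite ℤ M]
    {S : Submodule ℤ M} (hS : ∀ m, ∀ k : ℤ, k ≠ 0 → k • m ∈ S → m ∈ S) :
    ∃ r : M →ₗ[ℤ] S, ∀ s : S, r s = s := by
  have : Module.IsTorsionFree ℤ (M ⧸ S) := .of_smul_eq_zero fun k q hkq => by
    obtain ⟨m, rfl⟩ := S.mkQ_surjective q
    rw [← map_smul, mkQ_apply, Quotient.mk_eq_zero] at hkq
    rw [or_iff_not_imp_left, mkQ_apply, Quotient.mk_eq_zero]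
    exact fun hk => hS m k hk hkq
  -- `M ⧸ S` is finitely generated and torsion-free, hence free, so `mkQ` has a section `σ`.
  obtain ⟨σ, hσ⟩ := S.mkQ.exists_rightInverse_of_surjective S.range_mkQ
  have hmem (m : M) : m - σ (S.mkQ m) ∈ S := by
    rw [← Quotient.mk_eq_zero, ← mkQ_apply, map_sub, ← LinearMap.comp_apply, hσ,
      LinearMap.id_apply, sub_self]
  refine ⟨LinearMap.codRestrict S (LinearMap.id - σ ∘ₗ S.mkQ) hmem, fun s => ?_⟩
  ext
  simp [(Quotient.mk_eq_zero S).2 s.2]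

end Submodule

open LinearMap (BilinForm)

theorem exists_int_smul_mem_of_mem_span {S : Submodule ℤ V} {x : V}
    (hx : x ∈ span ℚ (S : Set V)) : ∃ n : ℤ, n ≠ 0 ∧ n • x ∈ S := by
  induction hx using span_induction with
  | mem x hx => exact ⟨1, one_ne_zero, by simpa using hx⟩
  | zero => exact ⟨1, one_ne_zero, by simp⟩
  | add x y _ _ hx hy =>
    obtain ⟨n, hn, hnx⟩ := hx
    obtain ⟨m, hm, hmy⟩ := hy
    refine ⟨m * n, mul_ne_zero hm hn, ?_⟩
    rw [smul_add, mul_smul, mul_comm, mul_smul]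
    exact add_mem (S.smul_mem m hnx) (S.smul_mem n hmy)
  | smul a x _ hx =>
    obtain ⟨n, hn, hnx⟩ := hx
    refine ⟨a.den * n, mul_ne_zero (mod_cast a.den_ne_zero) hn, ?_⟩
    have hclear : ((a.den : ℤ) * n) • a • x = a.num • n • x := by
      simp only [← Int.cast_smul_eq_zsmul ℚ, smul_smul]
      rw [← Rat.den_mul_eq_num]
      push_cast
      ring_nf
    rw [hclear]
    exact S.smul_mem _ hnx

section Lattice

variable {B : BilinForm ℚ V}

theorem finite_of_span_eq_top_of_integral [FiniteDimensional ℚ V] (hB : B.Nondegenerate)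
    {Γ : Submodule ℤ V} (hspan : span ℚ (Γ : Set V) = ⊤)
    (hint : ∀ u ∈ Γ, ∀ v ∈ Γ, ∃ k : ℤ, B u v = k) : Module.Finite ℤ Γ := by
  classical
  let b := Module.Basis.ofSpan hspan.ge
  have hbΓ : span ℤ (Set.range b) ≤ Γ := span_le.2 (Module.Basis.ofSpan_subset _)
  have hΓ : Γ ≤ B.dualSubmodule (span ℤ (Set.range b)) := fun u hu v hv => by
    obtain ⟨k, hk⟩ := hint u hu v (hbΓ hv)
    exact mem_one.2 ⟨k, by simp [hk]⟩
  rw [B.dualSubmodule_span_of_basis hB b] at hΓ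
  exact Module.Finite.iff_fg.2 ((fg_span (Set.finite_range _)).of_le hΓ)

theorem exists_forall_apply_eq_of_span_eq_top (hB : B.Nondegenerate) {Γ : Submodule ℤ V}
    [Module.Finite ℤ Γ] (hspan : span ℚ (Γ : Set V) = ⊤) (φ : Γ →ₗ[ℤ] ℚ) :
    ∃ x : V, ∀ y : Γ, B x y = φ y := by
  classical
  have : Module.IsTorsionFree ℤ V := .trans ℚ
  let bΓ := Module.Free.chooseBasis ℤ Γ
  have hli : LinearIndependent ℚ (Γ.subtype ∘ bΓ) :=
    (LinearIndependent.iff_fractionRing ℤ ℚ).1 (bΓ.linearIndependent.map' _ Γ.ker_subtype)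
  have hsp : ⊤ ≤ span ℚ (Set.range (Γ.subtype ∘ bΓ)) := by
    have hΓ : (Γ : Set V) ⊆ span ℤ (Set.range (Γ.subtype ∘ bΓ)) := by
      rw [Set.range_comp, ← map_span, bΓ.span_eq, map_subtype_top]
    rw [← hspan]
    exact (span_mono hΓ).trans (span_span_of_tower ℤ ℚ _).le
  let b := Module.Basis.mk hli hsp
  refine ⟨∑ i, φ (bΓ i) • B.dualBasis hB b i, fun y => ?_⟩
  have hext : (B (∑ i, φ (bΓ i) • B.dualBasis hB b i)).restrictScalars ℤ ∘ₗ Γ.subtype = φ := by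
    refine bΓ.ext fun j => ?_
    have hj : (bΓ j : V) = b j := by simp [b]
    simp [hj, B.apply_dualBasis_left]
  exact LinearMap.congr_fun hext y

theorem exists_mem_apply_eq_of_saturated (hB : B.Nondegenerate) {Γ : Submodule ℤ V}
    [Module.Finite ℤ Γ] (hspan : span ℚ (Γ : Set V) = ⊤)
    (hunimod : ∀ v : V, (∀ u ∈ Γ, ∃ k : ℤ, B v u = k) → v ∈ Γ) {S : Submodule ℤ V}
    (hSΓ : S ≤ Γ) (hS : ∀ v ∈ Γ, (∃ k : ℤ, k ≠ 0 ∧ k • v ∈ S) → v ∈ S) {l : V}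
    (hl : ∀ s ∈ S, ∃ k : ℤ, B l s = k) : ∃ x ∈ Γ, ∀ s ∈ S, B x s = B l s := by
  obtain ⟨r, hr⟩ := exists_retraction_of_saturated (S := S.comap Γ.subtype)
    fun v k hk hkv => hS v v.2 ⟨k, hk, hkv⟩
  obtain ⟨x, hx⟩ := exists_forall_apply_eq_of_span_eq_top hB hspan
    ((B l).restrictScalars ℤ ∘ₗ Γ.subtype ∘ₗ (S.comap Γ.subtype).subtype ∘ₗ r)
  refine ⟨x, hunimod x fun u hu => ?_, fun s hs => ?_⟩
  · rw [hx ⟨u, hu⟩]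
    exact hl _ (r ⟨u, hu⟩).2
  · rw [hx ⟨s, hSΓ hs⟩]
    simp [hr ⟨⟨s, hSΓ hs⟩, hs⟩]

theorem mem_orthogonal_span_iff {S : Set V} {w : V} :
    w ∈ B.orthogonal (span ℚ S) ↔ ∀ s ∈ S, B s w = 0 := by
  refine ⟨fun h s hs => h s (subset_span hs), fun h => ?_⟩
  have hker : span ℚ S ≤ LinearMap.ker (B.flip w) := span_le.2 fun s hs => h s hs
  exact fun u hu => hker hu

variable {Γ Λ : Submodule ℤ V}

theorem orthCompl_le : orthCompl B Γ Λ ≤ Γ := fun _ hv => hv.1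

theorem orthCompl_saturated :
    ∀ v ∈ Γ, (∃ k : ℤ, k ≠ 0 ∧ k • v ∈ orthCompl B Γ Λ) → v ∈ orthCompl B Γ Λ := by
  rintro v hv ⟨k, hk, hkv⟩
  refine ⟨hv, fun w hw => ?_⟩
  have hkvw := hkv.2 w hw
  rw [← Int.cast_smul_eq_zsmul ℚ, map_smul, LinearMap.smul_apply, smul_eq_zero] at hkvw
  exact hkvw.resolve_left (mod_cast hk)

theorem mem_orthCompl_iff (hBsymm : ∀ u v, B u v = B v u) {v : V} :
    v ∈ orthCompl B Γ Λ ↔ v ∈ Γ ∧ v ∈ B.orthogonal (span ℚ (Λ : Set V)) := by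
  simp only [mem_orthogonal_span_iff, hBsymm _ v]
  rfl

theorem span_orthCompl (hBsymm : ∀ u v, B u v = B v u) (hspan : span ℚ (Γ : Set V) = ⊤) :
    span ℚ (orthCompl B Γ Λ : Set V) = B.orthogonal (span ℚ (Λ : Set V)) := by
  refine le_antisymm (span_le.2 fun v hv => ((mem_orthCompl_iff hBsymm).1 hv).2) fun w hw => ?_
  obtain ⟨n, hn, hnw⟩ := exists_int_smul_mem_of_mem_span (S := Γ) (hspan.ge trivial : w ∈ _)
  have hnw' : n • w ∈ orthCompl B Γ Λ :=
    (mem_orthCompl_iff hBsymm).2 ⟨hnw, by rw [← Int.cast_smul_eq_zsmul ℚ]; exact smul_mem _ _ hw⟩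
  have := smul_mem (span ℚ (orthCompl B Γ Λ : Set V)) (n : ℚ)⁻¹ (subset_span hnw')
  rwa [← Int.cast_smul_eq_zsmul ℚ, smul_smul, inv_mul_cancel₀ (mod_cast hn), one_smul] at this

theorem mem_of_mem_dualLat (hprim : ∀ v ∈ Γ, (∃ k : ℤ, k ≠ 0 ∧ k • v ∈ Λ) → v ∈ Λ) {v : V}
    (hv : v ∈ dualLat B Λ) (hvΓ : v ∈ Γ) : v ∈ Λ :=
  hprim v hvΓ (exists_int_smul_mem_of_mem_span hv.1)

theorem apply_eq_zero_of_mem_dualLat (hBsymm : ∀ u v, B u v = B v u) {l w : V}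
    (hl : l ∈ dualLat B Λ) (hw : w ∈ dualLat B (orthCompl B Γ Λ)) : B l w = 0 :=
  span_le.2 (fun _ hv => ((mem_orthCompl_iff hBsymm).1 hv).2) hw.1 l hl.1

theorem exists_two_mul_of_add_mem (hBsymm : ∀ u v, B u v = B v u)
    (heven : ∀ v ∈ Γ, ∃ k : ℤ, B v v = 2 * k) {l w : V} (hl : l ∈ dualLat B Λ)
    (hw : w ∈ dualLat B (orthCompl B Γ Λ)) (hlw : l + w ∈ Γ) :
    ∃ k : ℤ, B l l + B w w = 2 * k := by
  obtain ⟨k, hk⟩ := heven _ hlw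
  have hlw₀ := apply_eq_zero_of_mem_dualLat hBsymm hl hw
  have hwl₀ : B w l = 0 := by rw [hBsymm]; exact hlw₀
  refine ⟨k, ?_⟩
  rw [← hk]
  simp only [map_add, LinearMap.add_apply, hlw₀, hwl₀]
  ring

theorem exists_add_mem_of_mem_dualLat_left (hB : B.Nondegenerate)
    (hBsymm : ∀ u v, B u v = B v u) [Module.Finite ℤ Γ] (hspan : span ℚ (Γ : Set V) = ⊤)
    (hint : ∀ u ∈ Γ, ∀ v ∈ Γ, ∃ k : ℤ, B u v = k)
    (hunimod : ∀ v : V, (∀ u ∈ Γ, ∃ k : ℤ, B v u = k) → v ∈ Γ) (hΛΓ : Λ ≤ Γ)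
    (hprim : ∀ v ∈ Γ, (∃ k : ℤ, k ≠ 0 ∧ k • v ∈ Λ) → v ∈ Λ) {l : V} (hl : l ∈ dualLat B Λ) :
    ∃ w ∈ dualLat B (orthCompl B Γ Λ), l + w ∈ Γ := by
  obtain ⟨x, hxΓ, hx⟩ := exists_mem_apply_eq_of_saturated hB hspan hunimod hΛΓ hprim hl.2
  refine ⟨x - l, ⟨?_, fun v hv => ?_⟩, by simpa⟩
  · rw [span_orthCompl hBsymm hspan, mem_orthogonal_span_iff]
    intro s hs
    rw [map_sub, hBsymm s, hBsymm s, hx s hs, sub_self]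
  · have hlv : B l v = 0 := ((mem_orthCompl_iff hBsymm).1 hv).2 l hl.1
    rw [map_sub, LinearMap.sub_apply, hlv, sub_zero]
    exact hint x hxΓ v hv.1

theorem exists_add_mem_of_mem_dualLat_right [FiniteDimensional ℚ V] (hB : B.Nondegenerate)
    (hBsymm : ∀ u v, B u v = B v u) [Module.Finite ℤ Γ] (hspan : span ℚ (Γ : Set V) = ⊤)
    (hint : ∀ u ∈ Γ, ∀ v ∈ Γ, ∃ k : ℤ, B u v = k)
    (hunimod : ∀ v : V, (∀ u ∈ Γ, ∃ k : ℤ, B v u = k) → v ∈ Γ) (hΛΓ : Λ ≤ Γ) {w : V}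
    (hw : w ∈ dualLat B (orthCompl B Γ Λ)) : ∃ l ∈ dualLat B Λ, l + w ∈ Γ := by
  obtain ⟨x, hxΓ, hx⟩ := exists_mem_apply_eq_of_saturated hB hspan hunimod
    orthCompl_le orthCompl_saturated hw.2
  have hwW : w ∈ B.orthogonal (span ℚ (Λ : Set V)) := by
    rw [← span_orthCompl hBsymm hspan]
    exact hw.1
  have hrefl : B.IsRefl := fun u v h => by rwa [hBsymm]
  refine ⟨x - w, ⟨?_, fun s hs => ?_⟩, by simpa⟩
  · rw [← B.orthogonal_orthogonal hB hrefl (span ℚ (Λ : Set V)), ← span_orthCompl hBsymm hspan,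
      mem_orthogonal_span_iff]
    intro v hv
    rw [map_sub, hBsymm v, hBsymm v, hx v hv, sub_self]
  · have hws : B w s = 0 := by rw [hBsymm]; exact hwW s (subset_span hs)
    rw [map_sub, LinearMap.sub_apply, hws, sub_zero]
    exact hint x hxΓ s (hΛΓ hs)

theorem exists_eq_add_of_mem [FiniteDimensional ℚ V] (hBsymm : ∀ u v, B u v = B v u)
    (hspan : span ℚ (Γ : Set V) = ⊤) (hint : ∀ u ∈ Γ, ∀ v ∈ Γ, ∃ k : ℤ, B u v = k)
    (hΛΓ : Λ ≤ Γ) (hΛnondeg : ∀ v ∈ span ℚ (Λ : Set V), v ≠ 0 → ∃ w ∈ Λ, B v w ≠ 0) {x : V}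
    (hx : x ∈ Γ) : ∃ l ∈ dualLat B Λ, ∃ w ∈ dualLat B (orthCompl B Γ Λ), x = l + w := by
  have hrefl : B.IsRefl := fun u v h => by rwa [hBsymm]
  have hU : (B.restrict (span ℚ (Λ : Set V))).Nondegenerate := .ofSeparatingLeft fun u hu => by
    by_contra hne
    obtain ⟨w, hwΛ, hw⟩ := hΛnondeg u u.2 (by simpa using hne)
    exact hw (hu ⟨w, subset_span hwΛ⟩)
  have hx' : x ∈ span ℚ (Λ : Set V) ⊔ B.orthogonal (span ℚ (Λ : Set V)) := by
    rw [(B.isCompl_orthogonal_of_restrict_nondegenerate hrefl hU).sup_eq_top]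
    trivial
  obtain ⟨l, hl, w, hw, rfl⟩ := mem_sup.1 hx'
  refine ⟨l, ⟨hl, fun s hs => ?_⟩, w, ⟨?_, fun v hv => ?_⟩, rfl⟩
  · have hws : B w s = 0 := by rw [hBsymm]; exact hw s (subset_span hs)
    rw [← add_zero (B l s), ← hws, ← LinearMap.add_apply, ← map_add]
    exact hint _ hx s (hΛΓ hs)
  · rwa [span_orthCompl hBsymm hspan]
  · have hlv : B l v = 0 := ((mem_orthCompl_iff hBsymm).1 hv).2 l hl
    rw [← zero_add (B w v), ← hlv, ← LinearMap.add_apply, ← map_add]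
    exact hint _ hx v hv.1

end Lattice

theorem gluing {V : Type*} [AddCommGroup V] [Module ℚ V] [FiniteDimensional ℚ V]
    (B : V →ₗ[ℚ] V →ₗ[ℚ] ℚ)
    (hBsymm : ∀ u v, B u v = B v u)
    (hBnondeg : ∀ v : V, v ≠ 0 → ∃ u, B v u ≠ 0)
    (Γ Λ : Submodule ℤ V)
    (hspan : span ℚ (Γ : Set V) = ⊤)
    (hΓint : ∀ u ∈ Γ, ∀ v ∈ Γ, ∃ k : ℤ, B u v = k)
    (hΓeven : ∀ v ∈ Γ, ∃ k : ℤ, B v v = 2 * k)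
    (hΓunimod : ∀ v : V, (∀ u ∈ Γ, ∃ k : ℤ, B v u = k) → v ∈ Γ)
    (hΛΓ : Λ ≤ Γ)
    (hΛprim : ∀ v ∈ Γ, (∃ k : ℤ, k ≠ 0 ∧ k • v ∈ Λ) → v ∈ Λ)
    (hΛnondeg : ∀ v ∈ span ℚ (Λ : Set V), v ≠ 0 → ∃ w ∈ Λ, B v w ≠ 0) :
    ∃ γ : Disc B Λ ≃+ Disc B (orthCompl B Γ Λ),
      (∀ (l : dualLat B Λ) (w : dualLat B (orthCompl B Γ Λ)),
        γ (Submodule.Quotient.mk l) = Submodule.Quotient.mk w →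
          ∃ k : ℤ, B l.1 l.1 + B w.1 w.1 = 2 * k) ∧
      (∀ x : V, x ∈ Γ ↔ ∃ (l : dualLat B Λ) (w : dualLat B (orthCompl B Γ Λ)),
        x = l.1 + w.1 ∧ γ (Submodule.Quotient.mk l) = Submodule.Quotient.mk w) := by
  have hB : B.Nondegenerate := LinearMap.BilinForm.Nondegenerate.ofSeparatingLeft fun v hv => by
    by_contra hne
    obtain ⟨u, hu⟩ := hBnondeg v hne
    exact hu (hv u)
  have := finite_of_span_eq_top_of_integral hB hspan hΓint
  obtain ⟨γ, hγ⟩ := Submodule.exists_linearEquiv_mk_eq_mk_iff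
    (L := Γ.comap ((dualLat B Λ).subtype.coprod (dualLat B (orthCompl B Γ Λ)).subtype))
    (M₀ := Λ.comap (dualLat B Λ).subtype) (N₀ := (orthCompl B Γ Λ).comap (dualLat B _).subtype)
    (fun l => by
      simpa using exists_add_mem_of_mem_dualLat_left hB hBsymm hspan hΓint hΓunimod hΛΓ hΛprim l.2)
    (fun w => by
      simpa using exists_add_mem_of_mem_dualLat_right hB hBsymm hspan hΓint hΓunimod hΛΓ w.2)
    (fun l => by simpa using ⟨mem_of_mem_dualLat hΛprim l.2, fun h => hΛΓ h⟩)
    (fun w => by simpa using ⟨mem_of_mem_dualLat orthCompl_saturated w.2, fun h => orthCompl_le h⟩)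
  have hglue (l : dualLat B Λ) (w : dualLat B (orthCompl B Γ Λ)) :
      γ (Submodule.Quotient.mk l) = Submodule.Quotient.mk w ↔ l.1 + w.1 ∈ Γ := by
    simpa using hγ l w
  refine ⟨γ.toAddEquiv, fun l w hlw => ?_, fun x => ⟨fun hx => ?_, ?_⟩⟩
  · exact exists_two_mul_of_add_mem hBsymm hΓeven l.2 w.2 ((hglue l w).1 hlw)
  · obtain ⟨l, hl, w, hw, rfl⟩ := exists_eq_add_of_mem hBsymm hspan hΓint hΛΓ hΛnondeg hx
    exact ⟨⟨l, hl⟩, ⟨w, hw⟩, rfl, (hglue _ _).2 hx⟩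
  · rintro ⟨l, w, rfl, hlw⟩
    exact (hglue l w).1 hlw
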